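/- Let U ⊂ ℝ² be open, let f : U → ℝ be C², and let γ : I → U be a differentiable curve on an interval I such that D²f(γ(t)) · γ'(t) = R · γ'(t) for all t ∈ I, where D²f denotes the Hessian matrix of f. Then the map t ↦ γ(t) + R·∇f(γ(t)) is constant on I. Similarly, if δ : I → U is a differentiable curve with D²f(δ(t)) · δ'(t) = −R · δ'(t) for all t, then t ↦ δ(t) − R·∇f(δ(t)) is constant on I. -/

import Mathlib

noncomputable section

/-- Counterclockwise rotation by 90 degrees: `R(x,y) = (−y, x)`. -/
def rot (X : ℝ × ℝ) : ℝ × ℝ := (-X.2, X.1)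

/-- Gradient of `f : ℝ² → ℝ`. -/
def grad (f : ℝ × ℝ → ℝ) (p : ℝ × ℝ) : ℝ × ℝ :=
  (fderiv ℝ f p (1, 0), fderiv ℝ f p (0, 1))

/-- The Hessian matrix of `f` at `p` applied to the vector `w`: `D²f(p)·w`. -/
def hessVec (f : ℝ × ℝ → ℝ) (p w : ℝ × ℝ) : ℝ × ℝ :=
  (fderiv ℝ (fderiv ℝ f) p (1, 0) w, fderiv ℝ (fderiv ℝ f) p (0, 1) w)

/-!
Differentiating `p(t) = γ(t) + c R∇f(γ(t))` with `c = ±1` gives `γ' + c R (D²f(γ) γ')`, and the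
hypothesis `D²f(γ) γ' = c R γ'` turns this into `γ' + c² R² γ' = γ' - γ' = 0`, since `R² = -1`.
The only subtlety is that the derivative of `∇f ∘ γ` is `D²f(γ) γ'` only up to transposing the
Hessian, which is harmless because the Hessian of a `C²` function is symmetric.
-/

lemma rot_smul (c : ℝ) (X : ℝ × ℝ) : rot (c • X) = c • rot X := by
  simp [rot]

lemma rot_rot (X : ℝ × ℝ) : rot (rot X) = -X := rfl

lemma HasDerivAt.rot {g : ℝ → ℝ × ℝ} {g' : ℝ × ℝ} {t : ℝ} (hg : HasDerivAt g g' t) :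
    HasDerivAt (fun t => rot (g t)) (rot g') t :=
  (hasFDerivAt_snd.comp_hasDerivAt t hg).neg.prodMk (hasFDerivAt_fst.comp_hasDerivAt t hg)

lemma HasDerivAt.grad_comp {f : ℝ × ℝ → ℝ} {γ : ℝ → ℝ × ℝ} {v : ℝ × ℝ} {t : ℝ}
    (hf : ContDiffAt ℝ 2 f (γ t)) (hγ : HasDerivAt γ v t) :
    HasDerivAt (fun t => grad f (γ t)) (hessVec f (γ t) v) t := by
  have hsymm : IsSymmSndFDerivAt ℝ f (γ t) := hf.isSymmSndFDerivAt (by simp)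
  have hdf : HasDerivAt (fun t => fderiv ℝ f (γ t)) (fderiv ℝ (fderiv ℝ f) (γ t) v) t :=
    ((hf.fderiv_right (m := 1) le_rfl).differentiableAt one_ne_zero).hasFDerivAt.comp_hasDerivAt
      t hγ
  have happly (w : ℝ × ℝ) :
      HasDerivAt (fun t => fderiv ℝ f (γ t) w) (fderiv ℝ (fderiv ℝ f) (γ t) w v) t := by
    simpa [hsymm v w] using hdf.clm_apply (hasDerivAt_const t w)
  exact (happly (1, 0)).prodMk (happly (0, 1))

theorem IsOpen.add_smul_rot_grad_comp_eq {s : Set ℝ} (hs : IsOpen s) (hs' : IsPreconnected s)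
    {f : ℝ × ℝ → ℝ} {γ : ℝ → ℝ × ℝ} {c : ℝ} (hc : c * c = 1)
    (hf : ∀ t ∈ s, ContDiffAt ℝ 2 f (γ t)) (hγd : DifferentiableOn ℝ γ s)
    (hγ : ∀ t ∈ s, hessVec f (γ t) (deriv γ t) = c • rot (deriv γ t))
    {t₁ t₂ : ℝ} (ht₁ : t₁ ∈ s) (ht₂ : t₂ ∈ s) :
    γ t₁ + c • rot (grad f (γ t₁)) = γ t₂ + c • rot (grad f (γ t₂)) := by
  have hderiv : ∀ t ∈ s, HasDerivAt (fun t => γ t + c • rot (grad f (γ t))) 0 t := by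
    intro t ht
    have hγt : HasDerivAt γ (deriv γ t) t :=
      (hγd.differentiableAt (hs.mem_nhds ht)).hasDerivAt
    have hzero : deriv γ t + c • rot (hessVec f (γ t) (deriv γ t)) = 0 := by
      rw [hγ t ht, rot_smul, rot_rot, smul_smul, hc, one_smul, add_neg_cancel]
    rw [← hzero]
    exact hγt.add ((hγt.grad_comp (hf t ht)).rot.const_smul c)
  exact hs.is_const_of_deriv_eq_zero hs'
    (fun t ht => (hderiv t ht).differentiableAt.differentiableWithinAt)
    (fun t ht => (hderiv t ht).deriv) ht₁ ht₂

/-- Along a curve `γ` with `D²f(γ)·γ' = R·γ'` the map `t ↦ γ(t) + R∇f(γ(t))` is constant;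
along a curve `δ` with `D²f(δ)·δ' = −R·δ'` the map `t ↦ δ(t) − R∇f(δ(t))` is constant. -/
theorem statement6 (U : Set (ℝ × ℝ)) (hU : IsOpen U)
    (f : ℝ × ℝ → ℝ) (hf : ContDiffOn ℝ 2 f U)
    (a b : ℝ) (γ δ : ℝ → ℝ × ℝ)
    (hγd : DifferentiableOn ℝ γ (Set.Ioo a b))
    (hγmem : ∀ t ∈ Set.Ioo a b, γ t ∈ U)
    (hγ : ∀ t ∈ Set.Ioo a b, hessVec f (γ t) (deriv γ t) = rot (deriv γ t))
    (hδd : DifferentiableOn ℝ δ (Set.Ioo a b))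
    (hδmem : ∀ t ∈ Set.Ioo a b, δ t ∈ U)
    (hδ : ∀ t ∈ Set.Ioo a b, hessVec f (δ t) (deriv δ t) = -rot (deriv δ t)) :
    (∀ t₁ ∈ Set.Ioo a b, ∀ t₂ ∈ Set.Ioo a b,
      γ t₁ + rot (grad f (γ t₁)) = γ t₂ + rot (grad f (γ t₂))) ∧
    (∀ t₁ ∈ Set.Ioo a b, ∀ t₂ ∈ Set.Ioo a b,
      δ t₁ - rot (grad f (δ t₁)) = δ t₂ - rot (grad f (δ t₂))) := by
  have hfU {p : ℝ → ℝ × ℝ} (hp : ∀ t ∈ Set.Ioo a b, p t ∈ U) :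
      ∀ t ∈ Set.Ioo a b, ContDiffAt ℝ 2 f (p t) :=
    fun t ht => hf.contDiffAt (hU.mem_nhds (hp t ht))
  constructor
  · intro t₁ ht₁ t₂ ht₂
    simpa using isOpen_Ioo.add_smul_rot_grad_comp_eq isPreconnected_Ioo (c := 1) (by norm_num)
      (hfU hγmem) hγd (by simpa using hγ) ht₁ ht₂
  · intro t₁ ht₁ t₂ ht₂
    simpa [← sub_eq_add_neg] using
      isOpen_Ioo.add_smul_rot_grad_comp_eq isPreconnected_Ioo (c := -1) (by norm_num)
        (hfU hδmem) hδd (by simpa using hδ) ht₁ ht₂
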